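/- arXiv:2408.11802 — 8 statements merged into one kernel-verified Lean document; each statement's English description precedes it below -/
import Mathlib

section
/- For any i, j, k ∈ ℕ with j ≥ i and k ≥ 1, the subset S_{i,j,k} = {(i,i)} ∪ {(j, j+k)ⁿ : n ≥ 1} of the bicyclic monoid is closed under multiplication (with (i,i) acting as identity on S_{i,j,k}) and is isomorphic as a monoid to (ℕ, +); explicitly, (j, j+k)ⁿ = (j, j + n·k) for all n ≥ 1. -/
def bmul (x y : ℕ × ℕ) : ℕ × ℕ :=
  (x.1 + y.1 - min x.2 y.1, x.2 + y.2 - min x.2 y.1)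

abbrev Cplus := {x : ℕ × ℕ // x.1 ≤ x.2}

instance : Mul Cplus :=
  ⟨fun x y => ⟨bmul x.1 y.1, by have hx := x.2; have hy := y.2; simp only [bmul]; omega⟩⟩

instance : One Cplus := ⟨⟨(0, 0), le_refl 0⟩⟩

theorem Cplus.mul_def (x y : Cplus) : (x * y).1 = bmul x.1 y.1 := rfl

theorem Cplus.one_def : (1 : Cplus).1 = (0, 0) := rfl

instance : Monoid Cplus where
  mul_assoc x y z := Subtype.ext (by
    simp only [Cplus.mul_def, bmul, Prod.ext_iff]; omega)
  one_mul x := Subtype.ext (by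
    have := x.2
    simp only [Cplus.mul_def, Cplus.one_def, bmul, Prod.ext_iff]; omega)
  mul_one x := Subtype.ext (by
    have := x.2
    simp only [Cplus.mul_def, Cplus.one_def, bmul, Prod.ext_iff]; omega)

def lam (k : ℕ) : Cplus → Cplus :=
  fun x => ⟨(k * x.1.1, k * x.1.2), Nat.mul_le_mul_left k x.2⟩

def sig (l m : ℕ) : Cplus → Cplus := fun x =>
  if x.1.1 = x.1.2 then 1 else ⟨(l, l + m * (x.1.2 - x.1.1)), by omega⟩

def lamns (n s : ℕ) : Cplus → Cplus := fun x =>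
  if x.1.1 = 0 then ⟨(0, n * x.1.2), Nat.zero_le _⟩
  else ⟨(n * x.1.1 - s, n * x.1.2 - s), by
    have := Nat.mul_le_mul_left n x.2; omega⟩

def vsig : Cplus → Cplus := fun x =>
  if x.1 = (0, 0) then 1 else ⟨(x.1.1 + 1, x.1.2 + 1), by have := x.2; omega⟩

def bpow (x : ℕ × ℕ) : ℕ → ℕ × ℕ
  | 0 => (0, 0)
  | n + 1 => bmul (bpow x n) x

def Sset (i j k : ℕ) : Set (ℕ × ℕ) :=
  insert (i, i) {p | ∃ n, 1 ≤ n ∧ p = bpow (j, j + k) n}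

/-! Powers of `(j, j + k)` are `(j, j + n * k)`. Elements with the same first coordinate
multiply by adding the excesses of their second coordinates, and `(i, i)` is neutral on pairs
with both coordinates at least `i`. Hence `0 ↦ (i, i)`, `n ↦ (j, j + n * k)` for `n ≥ 1` is an
additive map from `ℕ` onto `S_{i,j,k}`, injective since `k ≥ 1`; closure and neutrality of
`(i, i)` follow. -/

theorem bmul_same_fst (j m n : ℕ) : bmul (j, j + m) (j, j + n) = (j, j + (m + n)) := by
  simp only [bmul, Prod.ext_iff]
  omega

theorem bmul_diag_left {i j : ℕ} (l : ℕ) (h : i ≤ j) : bmul (i, i) (j, l) = (j, l) := by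
  simp only [bmul, Prod.ext_iff]
  omega

theorem bmul_diag_right {i l : ℕ} (j : ℕ) (h : i ≤ l) : bmul (j, l) (i, i) = (j, l) := by
  simp only [bmul, Prod.ext_iff]
  omega

theorem bpow_fst_add {n : ℕ} (j k : ℕ) (hn : n ≠ 0) : bpow (j, j + k) n = (j, j + n * k) := by
  induction n with
  | zero => exact absurd rfl hn
  | succ n ih =>
    rcases Nat.eq_zero_or_pos n with rfl | hpos
    · simp [bpow, bmul]
    · rw [bpow, ih hpos.ne', bmul_same_fst, add_one_mul]

namespace Sset

def enum (i j k n : ℕ) : ℕ × ℕ :=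
  if n = 0 then (i, i) else (j, j + n * k)

variable {i j k : ℕ}

theorem enum_zero : enum i j k 0 = (i, i) := if_pos rfl

theorem enum_of_ne_zero {n : ℕ} (hn : n ≠ 0) : enum i j k n = (j, j + n * k) := if_neg hn

theorem enum_add (hij : i ≤ j) (m n : ℕ) :
    enum i j k (m + n) = bmul (enum i j k m) (enum i j k n) := by
  rcases eq_or_ne m 0 with rfl | hm
  · rw [zero_add, enum_zero]
    rcases eq_or_ne n 0 with rfl | hn
    · rw [enum_zero, bmul_diag_left i le_rfl]
    · rw [enum_of_ne_zero hn, bmul_diag_left _ hij]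
  rcases eq_or_ne n 0 with rfl | hn
  · rw [add_zero, enum_zero, enum_of_ne_zero hm,
      bmul_diag_right _ (hij.trans (Nat.le_add_right _ _))]
  · rw [enum_of_ne_zero hm, enum_of_ne_zero hn, enum_of_ne_zero (by omega), bmul_same_fst,
      add_mul]

theorem enum_injective (hk : 1 ≤ k) : Function.Injective (enum i j k) := by
  intro m n h
  rcases eq_or_ne m 0 with rfl | hm <;> rcases eq_or_ne n 0 with rfl | hn
  · rfl
  · rw [enum_zero, enum_of_ne_zero hn, Prod.mk.injEq] at h
    have := Nat.mul_le_mul (Nat.one_le_iff_ne_zero.2 hn) hk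
    omega
  · rw [enum_zero, enum_of_ne_zero hm, Prod.mk.injEq] at h
    have := Nat.mul_le_mul (Nat.one_le_iff_ne_zero.2 hm) hk
    omega
  · rw [enum_of_ne_zero hm, enum_of_ne_zero hn, Prod.mk.injEq, add_right_inj] at h
    exact Nat.eq_of_mul_eq_mul_right hk h.2

theorem range_enum : Set.range (enum i j k) = Sset i j k := by
  ext p
  constructor
  · rintro ⟨n, rfl⟩
    rcases eq_or_ne n 0 with rfl | hn
    · exact Or.inl enum_zero
    · refine Or.inr ⟨n, Nat.one_le_iff_ne_zero.2 hn, ?_⟩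
      rw [enum_of_ne_zero hn, bpow_fst_add j k hn]
  · rintro (rfl | ⟨n, hn, rfl⟩)
    · exact ⟨0, enum_zero⟩
    · have hn : n ≠ 0 := Nat.one_le_iff_ne_zero.1 hn
      exact ⟨n, by rw [enum_of_ne_zero hn, bpow_fst_add j k hn]⟩

end Sset

/-- S_{i,j,k} = {(i,i)} ∪ {(j,j+k)ⁿ : n ≥ 1} is closed under bmul, has identity
(i,i), satisfies (j,j+k)ⁿ = (j, j+n·k), and is isomorphic to (ℕ, +). -/
theorem Sset_iso (i j k : ℕ) (hij : i ≤ j) (hk : 1 ≤ k) :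
    (∀ n, 1 ≤ n → bpow (j, j + k) n = (j, j + n * k)) ∧
    (∀ x ∈ Sset i j k, ∀ y ∈ Sset i j k, bmul x y ∈ Sset i j k) ∧
    (∀ x ∈ Sset i j k, bmul (i, i) x = x ∧ bmul x (i, i) = x) ∧
    ∃ J : ℕ → ℕ × ℕ, Function.Injective J ∧ Set.range J = Sset i j k ∧
      J 0 = (i, i) ∧ ∀ m n, J (m + n) = bmul (J m) (J n) := by
  refine ⟨fun n hn => bpow_fst_add j k (Nat.one_le_iff_ne_zero.1 hn), ?_, ?_,
    Sset.enum i j k, Sset.enum_injective hk, Sset.range_enum, Sset.enum_zero, Sset.enum_add hij⟩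
  · rw [← Sset.range_enum]
    rintro _ ⟨m, rfl⟩ _ ⟨n, rfl⟩
    exact ⟨m + n, Sset.enum_add hij m n⟩
  · rw [← Sset.range_enum]
    rintro _ ⟨n, rfl⟩
    rw [← Sset.enum_zero, ← Sset.enum_add hij, ← Sset.enum_add hij, zero_add, add_zero]
    exact ⟨rfl, rfl⟩
end

section
/- For any l ∈ ℕ and m ≥ 1, the map σ_{l,m} : C₊ → C₊ defined by σ_{l,m}(i,j) = (0,0) if i = j and σ_{l,m}(i,j) = (l, l + m·(j - i)) if i < j, is a monoid endomorphism of C₊. -/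
theorem sig_val (l m : ℕ) (x : Cplus) :
    (sig l m x).1 = if x.1.1 = x.1.2 then ((0,0) : ℕ × ℕ)
      else (l, l + m * (x.1.2 - x.1.1)) := by
  unfold sig; split <;> rfl

/-- σ_{l,m} is a monoid endomorphism of C₊. -/
theorem sig_is_endomorphism (l m : ℕ) (hm : 1 ≤ m) :
    (∀ x y : Cplus, sig l m (x * y) = sig l m x * sig l m y) ∧
    sig l m 1 = 1 := by
  refine ⟨fun x y => ?_, rfl⟩
  apply Subtype.ext
  rw [sig_val, Cplus.mul_def, Cplus.mul_def, sig_val, sig_val]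
  obtain ⟨⟨a, b⟩, hx⟩ := x
  obtain ⟨⟨c, d⟩, hy⟩ := y
  simp only at hx hy ⊢
  unfold bmul
  split_ifs <;> simp only [Prod.ext_iff]
  all_goals first
    | omega
    | (have e : b + d - b ⊓ c - (a + c - b ⊓ c) = (b - a) + (d - c) := by omega
       have e1 : a = b → m * (b - a) = 0 := fun h => by simp [h]
       have e2 : c = d → m * (d - c) = 0 := fun h => by simp [h]
       simp only [e, Nat.mul_add]
       constructor <;> omega)
end

section
/- For all l₁, l₂ ∈ ℕ and m₁, m₂ ≥ 1, the composition of σ_{l₁,m₁} followed by σ_{l₂,m₂} equals σ_{l₂, m₁·m₂}. -/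
namespace sig

variable {l m : ℕ} {x : Cplus}

theorem apply_of_eq (hx : x.1.1 = x.1.2) : sig l m x = 1 := if_pos hx

theorem coe_apply_of_lt (hx : x.1.1 < x.1.2) :
    (sig l m x).1 = (l, l + m * (x.1.2 - x.1.1)) := by
  rw [sig, if_neg hx.ne]

theorem map_one : sig l m 1 = 1 := apply_of_eq rfl

theorem lt_of_lt (hm : 1 ≤ m) (hx : x.1.1 < x.1.2) : (sig l m x).1.1 < (sig l m x).1.2 := by
  rw [coe_apply_of_lt hx]
  exact Nat.lt_add_of_pos_right (Nat.mul_pos hm (Nat.sub_pos_of_lt hx))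

end sig

theorem sig_comp_general (l₁ l₂ m₁ m₂ : ℕ) (h₁ : 1 ≤ m₁) :
    sig l₂ m₂ ∘ sig l₁ m₁ = sig l₂ (m₁ * m₂) := by
  funext x
  rcases x.2.eq_or_lt with hx | hx
  · rw [Function.comp_apply, sig.apply_of_eq hx, sig.apply_of_eq hx, sig.map_one]
  · apply Subtype.ext
    rw [Function.comp_apply, sig.coe_apply_of_lt (sig.lt_of_lt h₁ hx), sig.coe_apply_of_lt hx,
      sig.coe_apply_of_lt hx, Nat.add_sub_cancel_left, ← mul_assoc, mul_comm m₂]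

/-- σ_{l₁,m₁} followed by σ_{l₂,m₂} equals σ_{l₂,m₁m₂}. -/
theorem sig_comp (l₁ l₂ m₁ m₂ : ℕ) (h₁ : 1 ≤ m₁) (h₂ : 1 ≤ m₂) :
    sig l₂ m₂ ∘ sig l₁ m₁ = sig l₂ (m₁ * m₂) :=
  sig_comp_general l₁ l₂ m₁ m₂ h₁
end

section
/- The semigroup of endomorphisms {σ_{l,m} : l ∈ ℕ, m ≥ 1} of C₊ under composition is isomorphic to the direct product RZ(ℕ) × (ℕ₊, ·), where RZ(ℕ) is ℕ with the right-zero multiplication x·y = y and (ℕ₊, ·) is the multiplicative semigroup of positive integers. -/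
/-- The direct product RZ(ℕ) × (ℕ₊, ·): ℕ with right-zero multiplication times the
multiplicative semigroup of positive integers. -/
def RZprod : Type := ℕ × {m : ℕ // 1 ≤ m}

instance : Mul RZprod :=
  ⟨fun p q => (q.1, ⟨p.2.1 * q.2.1, Nat.mul_pos p.2.2 q.2.2⟩)⟩

theorem sig_apply_of_eq (l m : ℕ) {x : Cplus} (hx : x.1.1 = x.1.2) : sig l m x = 1 :=
  if_pos hx

theorem sig_apply_of_ne (l m : ℕ) {x : Cplus} (hx : x.1.1 ≠ x.1.2) :
    (sig l m x).1 = (l, l + m * (x.1.2 - x.1.1)) := by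
  simp only [sig, if_neg hx]

theorem sig_apply_ne_of_ne {l m : ℕ} (hm : 0 < m) {x : Cplus} (hx : x.1.1 ≠ x.1.2) :
    (sig l m x).1.1 ≠ (sig l m x).1.2 := by
  have hlen : 0 < m * (x.1.2 - x.1.1) := Nat.mul_pos hm (by have := x.2; omega)
  rw [sig_apply_of_ne l m hx]
  dsimp only
  omega

theorem sig_comp_sig (l₁ l₂ : ℕ) {m₁ : ℕ} (hm₁ : 0 < m₁) (m₂ : ℕ) :
    sig l₂ m₂ ∘ sig l₁ m₁ = sig l₂ (m₁ * m₂) := by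
  funext x
  by_cases hx : x.1.1 = x.1.2
  · rw [Function.comp_apply, sig_apply_of_eq l₁ m₁ hx, sig_apply_of_eq l₂ (m₁ * m₂) hx]
    exact sig_apply_of_eq l₂ m₂ rfl
  · apply Subtype.ext
    rw [Function.comp_apply, sig_apply_of_ne l₂ m₂ (sig_apply_ne_of_ne hm₁ hx),
      sig_apply_of_ne l₁ m₁ hx, sig_apply_of_ne l₂ _ hx, Nat.add_sub_cancel_left, mul_assoc,
      mul_left_comm]

-- `(0, 1)` is sent to `(l, l + m)`, from which both parameters can be read off.
theorem sig_injective {l₁ m₁ l₂ m₂ : ℕ} (h : sig l₁ m₁ = sig l₂ m₂) : l₁ = l₂ ∧ m₁ = m₂ := by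
  have h01 := congrArg Subtype.val (congrFun h ⟨(0, 1), zero_le_one⟩)
  rw [sig_apply_of_ne l₁ m₁ zero_ne_one, sig_apply_of_ne l₂ m₂ zero_ne_one, Prod.ext_iff] at h01
  dsimp only at h01
  omega

/-- (l,m) ↦ σ_{l,m} is a bijection from RZ(ℕ) × (ℕ₊, ·) onto the family
{σ_{l,m}} carrying the product to composition, i.e. the semigroup of the σ's under
composition is isomorphic to RZ(ℕ) × (ℕ₊, ·). -/
theorem sig_family_iso :
    Function.Injective (fun p : RZprod => sig p.1 p.2.1) ∧
    ∀ p q : RZprod, sig (p * q).1 (p * q).2.1 = sig q.1 q.2.1 ∘ sig p.1 p.2.1 := by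
  constructor
  · rintro ⟨l₁, m₁, _⟩ ⟨l₂, m₂, _⟩ h
    obtain ⟨rfl, rfl⟩ := sig_injective h
    rfl
  · rintro ⟨l₁, m₁, hm₁⟩ ⟨l₂, m₂, _⟩
    exact (sig_comp_sig l₁ l₂ hm₁ m₂).symm
end

section
/- The set I = {σ_{l,m} : l ∈ ℕ, m ≥ 1} ∪ {λ₀} is a two-sided ideal of the semigroup of endomorphisms of C₊ generated by {λₖ : k ∈ ℕ} ∪ {σ_{l,m} : l ∈ ℕ, m ≥ 1} under composition. -/
def Iset : Set (Function.End Cplus) :=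
  {g | ∃ l m, 1 ≤ m ∧ g = sig l m} ∪ {lam 0}

def Gset : Set (Function.End Cplus) :=
  {g | ∃ k, g = lam k} ∪ {g | ∃ l m, 1 ≤ m ∧ g = sig l m}

/-!
Composing generators stays inside `I`: for `k, m' ≥ 1` one has `σ_{l,m} ∘ λ_k = σ_{l,mk}`,
`λ_k ∘ σ_{l,m} = σ_{kl,km}` and `σ_{l,m} ∘ σ_{l',m'} = σ_{l,mm'}`, while `λ₀` absorbs every
generator from both sides because generators fix the identity `(0,0)`. The elements multiplying
`I` into itself on both sides form a subsemigroup, so they include the whole semigroup generated.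
-/

def Set.twoSidedIdealizer {M : Type*} [Semigroup M] (I : Set M) : Subsemigroup M where
  carrier := {g | ∀ f ∈ I, f * g ∈ I ∧ g * f ∈ I}
  mul_mem' {a b} ha hb f hf :=
    ⟨mul_assoc f a b ▸ (hb _ (ha f hf).1).1, (mul_assoc a b f).symm ▸ (ha _ (hb f hf).2).2⟩

lemma lam_zero_apply (x : Cplus) : lam 0 x = 1 :=
  Subtype.ext (by simp [lam, Cplus.one_def])

lemma lam_apply_one (k : ℕ) : lam k 1 = 1 :=
  Subtype.ext (by simp [lam, Cplus.one_def])

lemma sig_apply_one (l m : ℕ) : sig l m 1 = 1 := by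
  simp [sig, Cplus.one_def]

lemma lam_zero_comp (g : Cplus → Cplus) : lam 0 ∘ g = lam 0 :=
  funext fun x => by simp only [Function.comp_apply, lam_zero_apply]

lemma comp_lam_zero {g : Cplus → Cplus} (hg : g 1 = 1) : g ∘ lam 0 = lam 0 :=
  funext fun x => by simp only [Function.comp_apply, lam_zero_apply, hg]

lemma sig_comp_lam (l m : ℕ) {k : ℕ} (hk : 0 < k) : sig l m ∘ lam k = sig l (m * k) := by
  funext ⟨⟨i, j⟩, hij⟩
  by_cases h : i = j
  · simp [sig, lam, h]
  · have hk' : k * i ≠ k * j := fun he => h (Nat.eq_of_mul_eq_mul_left hk he)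
    simp only [Function.comp_apply, sig, lam, h, hk', if_false, Subtype.mk.injEq,
      Prod.mk.injEq, true_and]
    rw [← Nat.mul_sub]; ring

lemma lam_comp_sig (k l m : ℕ) : lam k ∘ sig l m = sig (k * l) (k * m) := by
  funext ⟨⟨i, j⟩, hij⟩
  by_cases h : i = j
  · simp only [Function.comp_apply, sig, h, if_true]; exact lam_apply_one k
  · simp only [Function.comp_apply, sig, lam, h, if_false, Subtype.mk.injEq, Prod.mk.injEq,
      true_and]
    rw [Nat.mul_add, Nat.mul_assoc]

lemma sig_comp_sig_s10 (l m l' : ℕ) {m' : ℕ} (hm' : 0 < m') :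
    sig l m ∘ sig l' m' = sig l (m * m') := by
  funext ⟨⟨i, j⟩, hij⟩
  by_cases h : i = j
  · simp only [Function.comp_apply, sig, h, if_true]; exact sig_apply_one l m
  · have h' : l' ≠ l' + m' * (j - i) := by
      have : 0 < m' * (j - i) := Nat.mul_pos hm' (by omega)
      omega
    simp only [Function.comp_apply, sig, h, h', if_false, Subtype.mk.injEq, Prod.mk.injEq,
      true_and]
    rw [Nat.add_sub_cancel_left, Nat.mul_assoc]

lemma sig_mem_Iset (l : ℕ) {m : ℕ} (hm : 0 < m) : sig l m ∈ Iset :=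
  Or.inl ⟨l, m, hm, rfl⟩

lemma lam_zero_mem_Iset : lam 0 ∈ Iset :=
  Or.inr rfl

lemma apply_one_of_mem_Gset {g : Function.End Cplus} (hg : g ∈ Gset) : g 1 = 1 := by
  rcases hg with ⟨k, rfl⟩ | ⟨l, m, -, rfl⟩
  exacts [lam_apply_one k, sig_apply_one l m]

lemma Gset_subset_twoSidedIdealizer_Iset : Gset ⊆ Iset.twoSidedIdealizer := by
  intro g hg f hf
  rw [Function.End.mul_def, Function.End.mul_def]
  rcases hf with ⟨l, m, hm, rfl⟩ | rfl
  · rcases hg with ⟨k, rfl⟩ | ⟨l', m', hm', rfl⟩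
    · rcases Nat.eq_zero_or_pos k with rfl | hk
      · rw [comp_lam_zero (sig_apply_one l m), lam_zero_comp]
        exact ⟨lam_zero_mem_Iset, lam_zero_mem_Iset⟩
      · rw [sig_comp_lam l m hk, lam_comp_sig]
        exact ⟨sig_mem_Iset l (Nat.mul_pos hm hk), sig_mem_Iset _ (Nat.mul_pos hk hm)⟩
    · rw [sig_comp_sig_s10 l m l' hm', sig_comp_sig_s10 l' m' l hm]
      exact ⟨sig_mem_Iset l (Nat.mul_pos hm hm'), sig_mem_Iset l' (Nat.mul_pos hm' hm)⟩
  · rw [lam_zero_comp g, comp_lam_zero (apply_one_of_mem_Gset hg)]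
    exact ⟨lam_zero_mem_Iset, lam_zero_mem_Iset⟩

lemma Iset_subset_Gset : Iset ⊆ Gset := by
  rintro f (⟨l, m, hm, rfl⟩ | rfl)
  exacts [Or.inr ⟨l, m, hm, rfl⟩, Or.inl ⟨0, rfl⟩]

/-- I = {σ_{l,m}} ∪ {λ₀} is a two-sided ideal of the subsemigroup of endomorphisms
of C₊ generated by the λ's and σ's under composition. -/
theorem Iset_is_ideal :
    Iset ⊆ (Subsemigroup.closure Gset : Set (Function.End Cplus)) ∧
    ∀ f ∈ Iset, ∀ g ∈ Subsemigroup.closure Gset, f * g ∈ Iset ∧ g * f ∈ Iset :=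
  ⟨Iset_subset_Gset.trans Subsemigroup.subset_closure, fun f hf _ hg =>
    Subsemigroup.closure_le.2 Gset_subset_twoSidedIdealizer_Iset hg f hf⟩
end

section
/- For every n ≥ 1 and every s ∈ {0, …, n-1}, the map λ_{n,s} : C₊ → C₊ defined by λ_{n,s}(0,j) = (0, n·j) and λ_{n,s}(i,j) = (n·i - s, n·j - s) for i ≥ 1, is an injective monoid endomorphism of C₊. -/
/-- For n ≥ 1 and 0 ≤ s < n, λ_{n,s} is an injective monoid endomorphism of C₊. -/
theorem lamns_is_injective_endomorphism (n s : ℕ) (hn : 1 ≤ n) (hs : s < n) :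
    Function.Injective (lamns n s) ∧
    (∀ x y : Cplus, lamns n s (x * y) = lamns n s x * lamns n s y) ∧
    lamns n s 1 = 1 := by
  have hcancel : ∀ u v : ℕ, n * u = n * v → u = v := fun u v h =>
    Nat.eq_of_mul_eq_mul_left hn h
  have hmono : ∀ u v : ℕ, u ≤ v → n * u ≤ n * v := fun u v h =>
    Nat.mul_le_mul_left n h
  have hbig : ∀ u : ℕ, u = 0 ∨ n ≤ n * u := by
    intro u
    rcases Nat.eq_zero_or_pos u with h | h
    · exact Or.inl h
    · exact Or.inr (Nat.le_mul_of_pos_right n h)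
  have hzero : ∀ u : ℕ, n * u = 0 → u = 0 := by
    intro u h
    rcases Nat.mul_eq_zero.mp h with h | h <;> omega
  refine ⟨?_, ?_, ?_⟩
  · rintro ⟨⟨a, b⟩, hab⟩ ⟨⟨c, d⟩, hcd⟩ h
    simp only [lamns] at h
    apply Subtype.ext
    simp only [Prod.ext_iff]
    split_ifs at h with h1 h2 h2 <;>
      simp only [Subtype.mk.injEq, Prod.mk.injEq] at h <;>
      obtain ⟨hL, hR⟩ := h
    · have hbd : b = d := hcancel b d hR
      omega
    · exfalso
      have := hbig a; have := hbig c; have := hbig b; have := hbig d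
      have := hmono a b hab; have := hmono c d hcd
      omega
    · exfalso
      have := hbig a; have := hbig c; have := hbig b; have := hbig d
      have := hmono a b hab; have := hmono c d hcd
      omega
    · have := hbig a; have := hbig c
      have hac : a = c := by
        apply hcancel; omega
      have hbd : b = d := by
        apply hcancel
        have := hmono a b hab; have := hmono c d hcd
        omega
      exact ⟨hac, hbd⟩
  · rintro ⟨⟨a, b⟩, hab⟩ ⟨⟨c, d⟩, hcd⟩
    apply Subtype.ext
    have hfact : ∀ u : ℕ, (u = 0 ∧ n * u = 0) ∨ (1 ≤ u ∧ n ≤ n * u) := by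
      intro u
      rcases Nat.eq_zero_or_pos u with h | h
      · exact Or.inl ⟨h, by simp [h]⟩
      · exact Or.inr ⟨h, Nat.le_mul_of_pos_right n h⟩
    have hmin : n * min b c = min (n * b) (n * c) := by
      rcases le_total b c with h | h
      · rw [min_eq_left h, min_eq_left (hmono _ _ h)]
      · rw [min_eq_right h, min_eq_right (hmono _ _ h)]
    have hd1 : n * (a + c - min b c) = n * a + n * c - min (n * b) (n * c) := by
      rw [Nat.mul_sub, Nat.mul_add, hmin]
    have hd2 : n * (b + d - min b c) = n * b + n * d - min (n * b) (n * c) := by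
      rw [Nat.mul_sub, Nat.mul_add, hmin]
    simp only [lamns]
    have := hfact a; have := hfact b; have := hfact c; have := hfact d
    have := hfact (a + c - min b c); have := hfact (b + d - min b c)
    have := hmono a b hab; have := hmono c d hcd
    split_ifs <;> simp only [Cplus.mul_def, bmul, Prod.ext_iff] at * <;> omega
  · apply Subtype.ext
    simp only [lamns, Cplus.one_def]
    norm_num
end

section
/- For all n₁, n₂ ≥ 1, s₁ ∈ {0,…,n₁-1}, s₂ ∈ {0,…,n₂-1}: the composition of λ_{n₁,s₁} followed by λ_{n₂,s₂} equals λ_{n₁n₂, s₁n₂ + s₂}, and moreover s₁n₂ + s₂ < n₁n₂, so the family {λ_{n,s}} is closed under composition. -/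
theorem lamns_val_of_fst_eq_zero (n s : ℕ) {x : Cplus} (hx : x.1.1 = 0) :
    (lamns n s x).1 = (0, n * x.1.2) := by
  simp only [lamns, hx, if_true]

theorem lamns_val_of_fst_ne_zero (n s : ℕ) {x : Cplus} (hx : x.1.1 ≠ 0) :
    (lamns n s x).1 = (n * x.1.1 - s, n * x.1.2 - s) := by
  simp only [lamns, hx, if_false]

theorem lamns_fst_ne_zero {n s : ℕ} (hs : s < n) {x : Cplus} (hx : x.1.1 ≠ 0) :
    (lamns n s x).1.1 ≠ 0 := by
  rw [lamns_val_of_fst_ne_zero n s hx]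
  exact Nat.sub_ne_zero_of_lt <|
    hs.trans_le (Nat.le_mul_of_pos_right n (Nat.pos_of_ne_zero hx))

-- Valid also when `n₁ * a < s₁`: then both truncated differences are `0`.
theorem mul_tsub_tsub_eq (n₁ n₂ s₁ s₂ a : ℕ) :
    n₂ * (n₁ * a - s₁) - s₂ = n₁ * n₂ * a - (s₁ * n₂ + s₂) := by
  rw [Nat.mul_sub, Nat.sub_sub, mul_comm n₂ s₁, mul_left_comm, ← mul_assoc]

theorem lamns_comp_lamns {n₁ s₁ : ℕ} (hs₁ : s₁ < n₁) (n₂ s₂ : ℕ) :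
    lamns n₂ s₂ ∘ lamns n₁ s₁ = lamns (n₁ * n₂) (s₁ * n₂ + s₂) := by
  funext x
  apply Subtype.ext
  by_cases hx : x.1.1 = 0
  · have hy : (lamns n₁ s₁ x).1.1 = 0 := by rw [lamns_val_of_fst_eq_zero _ _ hx]
    simp only [Function.comp_apply, lamns_val_of_fst_eq_zero _ _ hy,
      lamns_val_of_fst_eq_zero _ _ hx]
    rw [mul_left_comm, mul_assoc]
  · rw [Function.comp_apply, lamns_val_of_fst_ne_zero _ _ (lamns_fst_ne_zero hs₁ hx),
      lamns_val_of_fst_ne_zero _ _ hx, lamns_val_of_fst_ne_zero _ _ hx,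
      mul_tsub_tsub_eq, mul_tsub_tsub_eq]

theorem mul_add_lt_mul {n₁ n₂ s₁ s₂ : ℕ} (hs₁ : s₁ < n₁) (hs₂ : s₂ < n₂) :
    s₁ * n₂ + s₂ < n₁ * n₂ :=
  calc s₁ * n₂ + s₂ < s₁ * n₂ + n₂ := Nat.add_lt_add_left hs₂ _
    _ = (s₁ + 1) * n₂ := (Nat.succ_mul s₁ n₂).symm
    _ ≤ n₁ * n₂ := Nat.mul_le_mul_right n₂ hs₁

theorem lamns_comp_general (n₁ n₂ s₁ s₂ : ℕ)
    (hs₁ : s₁ < n₁) (hs₂ : s₂ < n₂) :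
    lamns n₂ s₂ ∘ lamns n₁ s₁ = lamns (n₁ * n₂) (s₁ * n₂ + s₂) ∧
    s₁ * n₂ + s₂ < n₁ * n₂ :=
  ⟨lamns_comp_lamns hs₁ n₂ s₂, mul_add_lt_mul hs₁ hs₂⟩

/-- λ_{n₁,s₁} followed by λ_{n₂,s₂} equals λ_{n₁n₂, s₁n₂+s₂}, and s₁n₂+s₂ < n₁n₂. -/
theorem lamns_comp (n₁ n₂ s₁ s₂ : ℕ) (h₁ : 1 ≤ n₁) (h₂ : 1 ≤ n₂)
    (hs₁ : s₁ < n₁) (hs₂ : s₂ < n₂) :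
    lamns n₂ s₂ ∘ lamns n₁ s₁ = lamns (n₁ * n₂) (s₁ * n₂ + s₂) ∧
    s₁ * n₂ + s₂ < n₁ * n₂ :=
  lamns_comp_general n₁ n₂ s₁ s₂ hs₁ hs₂
end

section
/- Let ε be an injective monoid endomorphism of C₊ with ε(0,1) = (0,n) for some n ≥ 1. Then there exists s ∈ {0,…,n-1} such that ε = λ_{n,s}. -/
/-! With `diag i = (i, i)` and `gen = (0, 1)` we have `(i, j) = diag i * gen ^ (j - i)` and
`gen ^ n * diag m = diag (m - n) * gen ^ n` (truncated subtraction). An endomorphism `ε` with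
`ε gen = gen ^ n` sends the idempotents `diag i` to idempotents `diag (f i)`, and applying it to
`gen * diag (i + 1) = diag i * gen` gives `f (i + 1) - n = f i`. Since `f 0 = 0` and `f` is
injective, `1 ≤ f 1 ≤ n` and `f (i + 1) = f 1 + n * i`: this is `λ_{n,s}` with `s = n - f 1`. -/

namespace Cplus

def gen : Cplus := ⟨(0, 1), Nat.zero_le 1⟩

def diag (i : ℕ) : Cplus := ⟨(i, i), le_refl i⟩

theorem diag_zero : diag 0 = 1 := rfl

theorem gen_pow (j : ℕ) : gen ^ j = ⟨(0, j), Nat.zero_le j⟩ := by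
  induction j with
  | zero => rfl
  | succ j ih =>
    rw [pow_succ, ih]
    exact Subtype.ext (by simp only [mul_def, bmul, gen, Prod.ext_iff]; omega)

theorem diag_mul_gen_pow (i k : ℕ) : diag i * gen ^ k = ⟨(i, i + k), by omega⟩ := by
  rw [gen_pow]
  exact Subtype.ext (by simp only [mul_def, bmul, diag, Prod.ext_iff]; omega)

theorem eq_diag_mul_gen_pow (x : Cplus) : x = diag x.1.1 * gen ^ (x.1.2 - x.1.1) := by
  rw [diag_mul_gen_pow]
  exact Subtype.ext (Prod.ext rfl (by have := x.2; simp only; omega))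

theorem diag_mul_gen_pow_inj {i i' k : ℕ} : diag i * gen ^ k = diag i' * gen ^ k ↔ i = i' := by
  simp only [diag_mul_gen_pow, Subtype.mk.injEq, Prod.mk.injEq]
  omega

theorem gen_pow_mul_diag (n m : ℕ) : gen ^ n * diag m = diag (m - n) * gen ^ n := by
  rw [gen_pow]
  exact Subtype.ext (by simp only [mul_def, bmul, diag, Prod.ext_iff]; omega)

theorem isIdempotentElem_iff_eq_diag {x : Cplus} : IsIdempotentElem x ↔ x = diag x.1.1 := by
  obtain ⟨⟨i, j⟩, hij : i ≤ j⟩ := x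
  simp only [IsIdempotentElem, Subtype.ext_iff, mul_def, bmul, diag, Prod.ext_iff, true_and]
  constructor <;> intro <;> omega

end Cplus

theorem eq_add_mul_of_succ_tsub_eq {f : ℕ → ℕ} {n : ℕ} (hpos : 0 < f 1)
    (hrec : ∀ i, f (i + 1) - n = f i) (i : ℕ) : f (i + 1) = f 1 + n * i := by
  induction i with
  | zero => rfl
  | succ i ih =>
    have := hrec (i + 1)
    rw [Nat.mul_succ]
    omega

open Cplus

namespace MonoidHom

variable (ε : Cplus →* Cplus)

def diagIndex (i : ℕ) : ℕ := (ε (diag i)).1.1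

theorem map_diag (i : ℕ) : ε (diag i) = diag (ε.diagIndex i) :=
  isIdempotentElem_iff_eq_diag.1 (isIdempotentElem_iff_eq_diag.2 rfl |>.map ε)

theorem diagIndex_zero : ε.diagIndex 0 = 0 := by
  simp only [diagIndex, diag_zero, map_one]
  rfl

variable {ε}

theorem diagIndex_injective (hinj : Function.Injective ε) : Function.Injective ε.diagIndex :=
  fun i k h => by
    have : ε (diag i) = ε (diag k) := by rw [map_diag, map_diag, h]
    simpa [diag] using hinj this

theorem diagIndex_one_pos (hinj : Function.Injective ε) : 0 < ε.diagIndex 1 :=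
  Nat.pos_of_ne_zero fun h =>
    one_ne_zero (diagIndex_injective hinj (h.trans ε.diagIndex_zero.symm))

variable {n : ℕ}

theorem map_eq_diag_mul_gen_pow (hgen : ε gen = gen ^ n) (x : Cplus) :
    ε x = diag (ε.diagIndex x.1.1) * gen ^ (n * (x.1.2 - x.1.1)) := by
  conv_lhs => rw [eq_diag_mul_gen_pow x]
  rw [map_mul, map_diag, map_pow, hgen, ← pow_mul]

theorem diagIndex_succ_tsub (hgen : ε gen = gen ^ n) (i : ℕ) :
    ε.diagIndex (i + 1) - n = ε.diagIndex i := by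
  have h := congrArg ε (gen_pow_mul_diag 1 (i + 1))
  simp only [pow_one, map_mul, map_diag, hgen, gen_pow_mul_diag, Nat.add_sub_cancel] at h
  exact diag_mul_gen_pow_inj.1 h

theorem diagIndex_one_le (hgen : ε gen = gen ^ n) : ε.diagIndex 1 ≤ n := by
  have h := diagIndex_succ_tsub hgen 0
  rw [zero_add, diagIndex_zero] at h
  omega

theorem eq_lamns (hinj : Function.Injective ε) (hgen : ε gen = gen ^ n) :
    ⇑ε = lamns n (n - ε.diagIndex 1) := by
  have hrec := eq_add_mul_of_succ_tsub_eq (diagIndex_one_pos hinj) (diagIndex_succ_tsub hgen)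
  have hle := diagIndex_one_le hgen
  funext ⟨⟨i, j⟩, hij⟩
  have hsub : n * (j - i) = n * j - n * i := Nat.mul_sub ..
  have hmono : n * i ≤ n * j := Nat.mul_le_mul_left n hij
  rw [map_eq_diag_mul_gen_pow hgen, diag_mul_gen_pow, lamns]
  split_ifs with hi
  · subst hi
    simp [diagIndex_zero]
  · obtain ⟨i, rfl⟩ := Nat.exists_eq_add_one_of_ne_zero hi
    have := hrec i
    have := Nat.mul_add_one n i
    simp only [Subtype.mk.injEq, Prod.mk.injEq]
    omega

end MonoidHom

theorem injective_endo_eq_lamns_general (ε : Cplus → Cplus)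
    (hmul : ∀ x y : Cplus, ε (x * y) = ε x * ε y) (hone : ε 1 = 1)
    (hinj : Function.Injective ε) (n : ℕ)
    (ha : ε ⟨(0, 1), Nat.zero_le 1⟩ = ⟨(0, n), Nat.zero_le n⟩) :
    ∃ s, s < n ∧ ε = lamns n s := by
  let φ : Cplus →* Cplus := ⟨⟨ε, hone⟩, hmul⟩
  have hgen : φ gen = gen ^ n := by rw [gen_pow]; exact ha
  have hpos := MonoidHom.diagIndex_one_pos (ε := φ) hinj
  have hle := MonoidHom.diagIndex_one_le hgen
  exact ⟨n - φ.diagIndex 1, by omega, MonoidHom.eq_lamns hinj hgen⟩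

/-- An injective monoid endomorphism ε of C₊ with ε(a) = aⁿ equals λ_{n,s} for some
s ∈ {0,…,n-1}. -/
theorem injective_endo_eq_lamns (ε : Cplus → Cplus)
    (hmul : ∀ x y : Cplus, ε (x * y) = ε x * ε y) (hone : ε 1 = 1)
    (hinj : Function.Injective ε) (n : ℕ) (hn : 1 ≤ n)
    (ha : ε ⟨(0, 1), Nat.zero_le 1⟩ = ⟨(0, n), Nat.zero_le n⟩) :
    ∃ s, s < n ∧ ε = lamns n s :=
  injective_endo_eq_lamns_general ε hmul hone hinj n ha
end
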